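/- arXiv:1707.02163 — 2 statements merged into one kernel-verified Lean document; each statement's English description precedes it below -/
import Mathlib

section
/- Let L be a prime with 2 a primitive root modulo L, and let α be a primitive L-th root of unity over GF(2). For every element k ∈ GF(2^{L-1}) there exists a unique polynomial g(x) = a_{L-1}x^{L-1} + ⋯ + a_1 x + a_0 over GF(2) of degree at most L−1 with at most (L−1)/2 nonzero coefficients such that k = g(α). -/
open Polynomial Finset

lemma zmod2_cases : ∀ c : ZMod 2, c = 0 ∨ c = 1 := by decide
lemma zmod2_sq : ∀ c : ZMod 2, c ^ 2 = c := by decide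
lemma zmod2_add_eq_zero : ∀ x y : ZMod 2, x + y = 0 → x = y := by decide
lemma zmod2_add_one_ne_zero : ∀ x : ZMod 2, (x + 1 ≠ 0) ↔ x = 0 := by decide
lemma zmod2_sub_eq_one : ∀ x y : ZMod 2, x - y = 1 → x = y + 1 := by decide

set_option maxHeartbeats 1000000 in
/-- If `L` is a prime with primitive root `2` and `α` a primitive `L`-th root of
unity over GF(2), then every `k ∈ GF(2^(L-1))` (an element of the algebraic
closure fixed by the (L-1)-st Frobenius power) has a unique representation
`k = a_0 + a_1 α + … + a_(L-1) α^(L-1)` with binary coefficients, at most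
`(L-1)/2` of which are nonzero. -/
theorem stmt6 (L : ℕ) (hL : Nat.Prime L) (hord : orderOf (2 : ZMod L) = L - 1)
    (α : AlgebraicClosure (ZMod 2)) (hα : IsPrimitiveRoot α L)
    (k : AlgebraicClosure (ZMod 2)) (hk : k ^ (2 ^ (L - 1)) = k) :
    ∃! a : Fin L → ZMod 2,
      (Finset.univ.filter fun j : Fin L => a j ≠ 0).card ≤ (L - 1) / 2 ∧
      k = ∑ j : Fin L,
            algebraMap (ZMod 2) (AlgebraicClosure (ZMod 2)) (a j) * α ^ (j : ℕ) := by
  -- basic numerics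
  have hpow1 : (2 : ZMod L) ^ (L - 1) = 1 := by rw [← hord]; exact pow_orderOf_eq_one _
  have hL2 : L ≠ 2 := by
    rintro rfl
    have hne : (2 : ZMod 2) ^ (2 - 1) ≠ 1 := by decide
    exact hne hpow1
  haveI : Fact (Nat.Prime L) := ⟨hL⟩
  haveI : DecidableEq (AlgebraicClosure (ZMod 2)) := Classical.decEq _
  have hL1 : 1 < L := hL.one_lt
  have hL3 : 3 ≤ L := by
    rcases hL.eq_two_or_odd with h | h
    · exact absurd h hL2
    · omega
  have hLodd : L % 2 = 1 := by
    rcases hL.eq_two_or_odd with h | h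
    · exact absurd h hL2
    · exact h
  have hLsub : L - 1 + 1 = L := by omega
  have hrangeL : Finset.range L = insert (L - 1) (Finset.range (L - 1)) := by
    conv_lhs => rw [← hLsub]
    rw [Finset.range_add_one]
  let K := AlgebraicClosure (ZMod 2)
  let A : ZMod 2 →+* K := algebraMap (ZMod 2) K
  haveI : CharP K 2 := charP_of_injective_algebraMap (algebraMap (ZMod 2) K).injective 2
  have hAsq : ∀ c : ZMod 2, A c ^ 2 = A c := fun c => by
    rw [← map_pow, zmod2_sq]
  -- α^L = 1, α ≠ 1, sum of all powers = 0
  have hαL : α ^ L = 1 := hα.pow_eq_one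
  have hα1 : α ≠ 1 := hα.ne_one hL1
  have hsum0 : ∑ n ∈ Finset.range L, α ^ n = 0 := by
    have h := geom_sum_mul α L
    rw [hαL, sub_self] at h
    rcases mul_eq_zero.mp h with h | h
    · exact h
    · exact absurd (sub_eq_zero.mp h) hα1
  have hordα : orderOf α = L := hα.eq_orderOf.symm
  have hαmod : ∀ n : ℕ, α ^ n = α ^ (n % L) := by
    intro n
    conv_lhs => rw [← Nat.div_add_mod n L]
    rw [pow_add, pow_mul, hαL, one_pow, one_mul]
  have hαeq : ∀ m n : ℕ, α ^ m = α ^ n ↔ m % L = n % L := by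
    intro m n
    constructor
    · intro h
      rw [hαmod m, hαmod n] at h
      exact hα.pow_inj (Nat.mod_lt _ hL.pos) (Nat.mod_lt _ hL.pos) h
    · intro h; rw [hαmod m, hαmod n, h]
  -- α is fixed by the (L-1)-st power of Frobenius
  have hαfix : α ^ 2 ^ (L - 1) = α := by
    have hmod : 2 ^ (L - 1) % L = 1 % L := by
      haveI : NeZero L := ⟨hL.pos.ne'⟩
      have : ((2 ^ (L - 1) : ℕ) : ZMod L) = ((1 : ℕ) : ZMod L) := by push_cast; simpa using hpow1
      exact (ZMod.natCast_eq_natCast_iff _ _ _).mp this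
    calc α ^ 2 ^ (L - 1) = α ^ 1 := (hαeq _ _).mpr hmod
      _ = α := pow_one α
  -- key linear independence
  have keylem : ∀ g : Fin (L - 1) → ZMod 2,
      (∑ i : Fin (L - 1), A (g i) * α ^ (i : ℕ)) = 0 → g = 0 := by
    intro g hg
    by_contra hgne
    obtain ⟨i₀, hi₀⟩ := Function.ne_iff.mp hgne
    set p : (ZMod 2)[X] := ∑ i : Fin (L - 1), Polynomial.monomial (i : ℕ) (g i) with hp
    have hcoeff : ∀ i : Fin (L - 1), p.coeff (i : ℕ) = g i := by
      intro i
      rw [hp, finset_sum_coeff]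
      rw [Finset.sum_eq_single i]
      · simp [coeff_monomial]
      · intro j _ hj
        rw [coeff_monomial, if_neg (fun h => hj (Fin.val_injective h))]
      · simp
    have hpne : p ≠ 0 := fun h => hi₀ (by simp [← hcoeff i₀, h])
    have hdeg : p.natDegree ≤ L - 2 := by
      apply natDegree_sum_le_of_forall_le
      intro i _
      exact (natDegree_monomial_le _).trans (by have := i.2; omega)
    have haev : Polynomial.aeval α p = 0 := by
      rw [hp, map_sum]
      rw [← hg]
      exact Finset.sum_congr rfl fun i _ => by rw [aeval_monomial]
    have hint : IsIntegral (ZMod 2) α := Algebra.IsIntegral.isIntegral α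
    have hdvd : minpoly (ZMod 2) α ∣ p := minpoly.dvd _ _ haev
    have hup : (minpoly (ZMod 2) α).natDegree ≤ L - 2 :=
      (Polynomial.natDegree_le_of_dvd hdvd hpne).trans hdeg
    -- lower bound via Frobenius conjugates
    set q : K[X] := (minpoly (ZMod 2) α).map A with hq
    have hq0 : q ≠ 0 := by
      rw [hq, Polynomial.map_ne_zero_iff (algebraMap (ZMod 2) K).injective]
      exact minpoly.ne_zero hint
    have hqsq : ∀ x : K, q.eval (x ^ 2) = (q.eval x) ^ 2 := by
      intro x
      rw [eval_eq_sum_range, eval_eq_sum_range]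
      rw [sum_pow_char]
      apply Finset.sum_congr rfl
      intro i _
      rw [mul_pow, ← pow_mul, ← pow_mul]
      congr 1
      · rw [hq, coeff_map, hAsq]
      · ring_nf
    have hroots : ∀ i : ℕ, q.eval (α ^ 2 ^ i) = 0 := by
      intro i
      induction i with
      | zero =>
        simp only [pow_zero, pow_one]
        rw [hq, eval_map, ← aeval_def, minpoly.aeval]
      | succ n ih =>
        have : α ^ 2 ^ (n + 1) = (α ^ 2 ^ n) ^ 2 := by rw [← pow_mul, pow_succ]
        rw [this, hqsq, ih, zero_pow two_ne_zero]
    have h2ne : (2 : ZMod L) ≠ 0 := by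
      intro h
      rw [h] at hpow1
      rw [zero_pow (by omega)] at hpow1
      exact zero_ne_one hpow1
    have hinj : ∀ i j : ℕ, i < L - 1 → j < L - 1 → α ^ 2 ^ i = α ^ 2 ^ j → i = j := by
      have haux : ∀ i j : ℕ, i ≤ j → j < L - 1 → α ^ 2 ^ i = α ^ 2 ^ j → i = j := by
        intro i j hij hj h
        have hmod : 2 ^ i ≡ 2 ^ j [MOD L] := (hαeq _ _).mp h
        have hz : ((2 : ZMod L)) ^ i = (2 : ZMod L) ^ j := by
          have := (ZMod.natCast_eq_natCast_iff _ _ _).mpr hmod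
          push_cast at this; exact this
        have hsplit : (2 : ZMod L) ^ j = (2 : ZMod L) ^ i * (2 : ZMod L) ^ (j - i) := by
          rw [← pow_add]; congr 1; omega
        rw [hsplit] at hz
        have hpi : (2 : ZMod L) ^ i ≠ 0 := pow_ne_zero _ h2ne
        have hone : (2 : ZMod L) ^ (j - i) = 1 := by
          have hz' : (2 : ZMod L) ^ i * ((2 : ZMod L) ^ (j - i) - 1) = 0 := by
            rw [mul_sub, ← hz]; ring
          rcases mul_eq_zero.mp hz' with hz' | hz'
          · exact absurd hz' hpi
          · exact sub_eq_zero.mp hz'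
        have hdvd' : L - 1 ∣ j - i := hord ▸ orderOf_dvd_of_pow_eq_one hone
        have h0 : j - i = 0 := Nat.eq_zero_of_dvd_of_lt hdvd' (by omega)
        omega
      intro i j hi hj h
      rcases le_total i j with hij | hij
      · exact haux i j hij hj h
      · exact (haux j i hij hi h.symm).symm
    set t : Finset K := (Finset.range (L - 1)).image (fun i => α ^ 2 ^ i) with ht
    have htcard : t.card = L - 1 := by
      rw [ht, Finset.card_image_of_injOn, Finset.card_range]
      intro i hi j hj h
      exact hinj i j (Finset.mem_range.mp hi) (Finset.mem_range.mp hj) h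
    have htsub : t ⊆ q.roots.toFinset := by
      intro x hx
      rw [ht, Finset.mem_image] at hx
      obtain ⟨i, _, rfl⟩ := hx
      rw [Multiset.mem_toFinset, mem_roots hq0]
      exact hroots i
    have hlow : L - 1 ≤ q.natDegree :=
      htcard ▸ (Finset.card_le_card htsub).trans
        ((Multiset.toFinset_card_le _).trans (q.card_roots'))
    have hqdeg : q.natDegree = (minpoly (ZMod 2) α).natDegree := by
      rw [hq, natDegree_map]
    omega
  -- the representation map on Fin (L-1)
  set Φ : (Fin (L - 1) → ZMod 2) → K :=
    fun c => ∑ i : Fin (L - 1), A (c i) * α ^ (i : ℕ) with hΦ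
  have hΦsub : ∀ c c', Φ c - Φ c' = Φ (c - c') := by
    intro c c'
    rw [hΦ]
    rw [← Finset.sum_sub_distrib]
    exact Finset.sum_congr rfl fun i _ => by rw [Pi.sub_apply, map_sub, sub_mul]
  have hΦinj : Function.Injective Φ := by
    intro c c' h
    have h0 : Φ (c - c') = 0 := by rw [← hΦsub, h, sub_self]
    have := keylem _ h0
    funext i
    have := congrFun this i
    simpa [sub_eq_zero] using this
  -- the fixed-point set
  set S : Set K := {x : K | x ^ 2 ^ (L - 1) = x} with hS
  set f : K[X] := X ^ 2 ^ (L - 1) - X with hf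
  have h2le : (2 : ℕ) ≤ 2 ^ (L - 1) := by
    calc (2 : ℕ) = 2 ^ 1 := rfl
      _ ≤ 2 ^ (L - 1) := Nat.pow_le_pow_right (by norm_num) (by omega)
  have hfne : f ≠ 0 := by
    intro h
    have hc : f.coeff (2 ^ (L - 1)) = 1 := by
      rw [hf, coeff_sub, coeff_X_pow, if_pos rfl, coeff_X, if_neg (by omega), sub_zero]
    rw [h, coeff_zero] at hc
    exact zero_ne_one hc
  -- S is contained in the roots of f
  have hSsub : S ⊆ ↑(f.roots.toFinset) := by
    intro x hx
    simp only [Finset.mem_coe, Multiset.mem_toFinset, mem_roots hfne]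
    show f.eval x = 0
    rw [hf]
    simp only [eval_sub, eval_pow, eval_X]
    rw [hx, sub_self]
  have hSfin : S.Finite := Set.Finite.subset (f.roots.toFinset).finite_toSet hSsub
  have hScard : S.ncard ≤ 2 ^ (L - 1) := by
    have h1 := Set.ncard_le_ncard hSsub (f.roots.toFinset).finite_toSet
    rw [Set.ncard_coe_finset] at h1
    refine h1.trans ?_
    refine (Multiset.toFinset_card_le _).trans ?_
    refine (f.card_roots').trans ?_
    rw [hf]
    refine (natDegree_sub_le _ _).trans ?_
    rw [natDegree_X_pow, natDegree_X]
    omega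
  -- the range of Φ is contained in S
  have hrange : Set.range Φ ⊆ S := by
    rintro _ ⟨c, rfl⟩
    show (Φ c) ^ 2 ^ (L - 1) = Φ c
    have hmap := map_sum (iterateFrobenius K 2 (L - 1))
      (fun i : Fin (L - 1) => A (c i) * α ^ (i : ℕ)) Finset.univ
    simp only [iterateFrobenius_def] at hmap
    simp only [hΦ] at hmap ⊢
    rw [hmap]
    refine Finset.sum_congr rfl fun i _ => ?_
    rw [mul_pow, ← pow_mul, mul_comm (i : ℕ) (2 ^ (L - 1)), pow_mul, hαfix]
    congr 1
    rcases zmod2_cases (c i) with h | h <;> rw [h]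
    · rw [map_zero, zero_pow (by positivity)]
    · rw [map_one, one_pow]
  have hcardΦ : (Set.range Φ).ncard = 2 ^ (L - 1) := by
    rw [← Nat.card_coe_set_eq, Nat.card_range_of_injective hΦinj,
      Nat.card_eq_fintype_card]
    simp [ZMod.card]
  have hSeq : Set.range Φ = S :=
    Set.eq_of_subset_of_ncard_le hrange (hScard.trans_eq hcardΦ.symm) hSfin
  have hkmem : k ∈ Set.range Φ := by rw [hSeq]; exact hk
  obtain ⟨c, hc⟩ := hkmem
  -- splitting sums over Fin L
  have hLle : L - 1 ≤ L := by omega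
  have hsplit : ∀ a : Fin L → ZMod 2,
      ∑ j : Fin L, A (a j) * α ^ (j : ℕ)
        = (∑ i : Fin (L - 1), A (a (Fin.castLE hLle i)) * α ^ (i : ℕ))
          + A (a ⟨L - 1, by omega⟩) * α ^ (L - 1) := by
    intro a
    have h1 : ∑ j : Fin L, A (a j) * α ^ (j : ℕ)
        = ∑ n ∈ Finset.range L, A (if h : n < L then a ⟨n, h⟩ else 0) * α ^ n := by
      rw [← Fin.sum_univ_eq_sum_range (fun n => A (if h : n < L then a ⟨n, h⟩ else 0) * α ^ n) L]
      refine Finset.sum_congr rfl fun i _ => ?_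
      rw [dif_pos i.isLt]
    have h2 : ∑ i : Fin (L - 1), A (a (Fin.castLE hLle i)) * α ^ (i : ℕ)
        = ∑ n ∈ Finset.range (L - 1),
            A (if h : n < L then a ⟨n, h⟩ else 0) * α ^ n := by
      rw [← Fin.sum_univ_eq_sum_range
        (fun n => A (if h : n < L then a ⟨n, h⟩ else 0) * α ^ n) (L - 1)]
      refine Finset.sum_congr rfl fun i _ => ?_
      rw [dif_pos (lt_of_lt_of_le i.isLt hLle)]
      rfl
    rw [h1, h2, hrangeL, Finset.sum_insert (by simp)]
    rw [add_comm]
    congr 1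
    rw [dif_pos (by omega : L - 1 < L)]
  have htwo : (2 : AlgebraicClosure (ZMod 2)) = 0 := by
    exact_mod_cast CharP.cast_eq_zero (AlgebraicClosure (ZMod 2)) 2
  have hαsplit : α ^ (L - 1) = ∑ i : Fin (L - 1), α ^ (i : ℕ) := by
    have h0 := hsum0
    rw [hrangeL, Finset.sum_insert (by simp)] at h0
    rw [Fin.sum_univ_eq_sum_range (fun n => α ^ n) (L - 1)]
    linear_combination h0 - (∑ n ∈ Finset.range (L - 1), α ^ n) * htwo
  -- kernel elements are constant
  have hker : ∀ d : Fin L → ZMod 2, (∑ j : Fin L, A (d j) * α ^ (j : ℕ)) = 0 →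
      ∀ j : Fin L, d j = d ⟨L - 1, by omega⟩ := by
    intro d hd
    rw [hsplit] at hd
    have h3 : Φ (fun i => d (Fin.castLE hLle i) + d ⟨L - 1, by omega⟩) = 0 := by
      simp only [hΦ]
      have h4 : ∀ i : Fin (L - 1),
          A (d (Fin.castLE hLle i) + d ⟨L - 1, by omega⟩) * α ^ (i : ℕ)
            = A (d (Fin.castLE hLle i)) * α ^ (i : ℕ)
              + A (d ⟨L - 1, by omega⟩) * α ^ (i : ℕ) := fun i => by
        rw [map_add, add_mul]
      rw [Finset.sum_congr rfl fun i _ => h4 i, Finset.sum_add_distrib,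
        ← Finset.mul_sum, ← hαsplit]
      exact hd
    have h5 := keylem _ h3
    intro j
    by_cases hj : (j : ℕ) < L - 1
    · have h6 := congrFun h5 ⟨(j : ℕ), hj⟩
      simp only [Pi.zero_apply] at h6
      have h7 : Fin.castLE hLle ⟨(j : ℕ), hj⟩ = j := by
        apply Fin.ext; rfl
      rw [h7] at h6
      exact zmod2_add_eq_zero _ _ h6
    · have hjl := j.isLt
      have h8 : j = ⟨L - 1, by omega⟩ := by
        apply Fin.ext
        simp only [Fin.val_mk]
        omega
      rw [h8]
  -- the candidate representation
  set a₀ : Fin L → ZMod 2 :=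
    fun j => if h : (j : ℕ) < L - 1 then c ⟨(j : ℕ), h⟩ else 0 with ha₀
  have ha₀sum : ∑ j : Fin L, A (a₀ j) * α ^ (j : ℕ) = k := by
    rw [hsplit]
    have hlast : a₀ ⟨L - 1, by omega⟩ = 0 := by
      simp only [ha₀]
      exact dif_neg (by omega)
    rw [hlast, map_zero, zero_mul, add_zero, ← hc]
    simp only [hΦ]
    refine Finset.sum_congr rfl fun i _ => ?_
    congr 2
    simp only [ha₀]
    have hi : ((Fin.castLE hLle i : Fin L) : ℕ) < L - 1 := i.isLt
    rw [dif_pos hi]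
    exact congrArg c (Fin.ext rfl)
  -- flipping all coefficients preserves the value
  have hflip : ∀ a : Fin L → ZMod 2,
      ∑ j : Fin L, A (a j + 1) * α ^ (j : ℕ)
        = ∑ j : Fin L, A (a j) * α ^ (j : ℕ) := by
    intro a
    have hzero : ∑ j : Fin L, α ^ (j : ℕ) = 0 := by
      rw [Fin.sum_univ_eq_sum_range (fun n => α ^ n) L]; exact hsum0
    have h1 : ∀ j : Fin L, A (a j + 1) * α ^ (j : ℕ)
        = A (a j) * α ^ (j : ℕ) + α ^ (j : ℕ) := fun j => by
      rw [map_add, map_one, add_mul, one_mul]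
    rw [Finset.sum_congr rfl fun j _ => h1 j, Finset.sum_add_distrib, hzero, add_zero]
  have huL : (Finset.univ : Finset (Fin L)).card = L := by simp
  have hflipcard : ∀ a : Fin L → ZMod 2,
      (Finset.univ.filter fun j => a j + 1 ≠ 0).card
        = L - (Finset.univ.filter fun j => a j ≠ 0).card := by
    intro a
    have h1 : (Finset.univ.filter fun j => a j + 1 ≠ 0)
        = (Finset.univ.filter fun j => ¬(a j ≠ 0)) := by
      refine Finset.filter_congr fun j _ => ?_
      simp only [zmod2_add_one_ne_zero, ne_eq, not_not]
    have h2 := Finset.card_filter_add_card_filter_not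
      (s := (Finset.univ : Finset (Fin L))) (p := fun j => a j ≠ 0)
    rw [huL] at h2
    rw [h1]
    omega
  -- pairwise uniqueness
  have huniq : ∀ a b : Fin L → ZMod 2,
      (Finset.univ.filter fun j => a j ≠ 0).card ≤ (L - 1) / 2 →
      (∑ j : Fin L, A (a j) * α ^ (j : ℕ)) = k →
      (Finset.univ.filter fun j => b j ≠ 0).card ≤ (L - 1) / 2 →
      (∑ j : Fin L, A (b j) * α ^ (j : ℕ)) = k →
      a = b := by
    intro a b ha1 ha2 hb1 hb2
    have hd : ∑ j : Fin L, A (a j - b j) * α ^ (j : ℕ) = 0 := by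
      have : ∀ j : Fin L, A (a j - b j) * α ^ (j : ℕ)
          = A (a j) * α ^ (j : ℕ) - A (b j) * α ^ (j : ℕ) := fun j => by
        rw [map_sub, sub_mul]
      rw [Finset.sum_congr rfl fun j _ => this j, Finset.sum_sub_distrib, ha2, hb2, sub_self]
    have hcon := hker _ hd
    rcases zmod2_cases (a ⟨L - 1, by omega⟩ - b ⟨L - 1, by omega⟩) with h0 | h1
    · funext j
      have := hcon j
      rw [h0] at this
      exact sub_eq_zero.mp this
    · exfalso
      have hab : ∀ j : Fin L, a j = b j + 1 := fun j =>
        zmod2_sub_eq_one _ _ ((hcon j).trans h1)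
      have hfa : (Finset.univ.filter fun j => a j ≠ 0)
          = (Finset.univ.filter fun j => b j + 1 ≠ 0) := by
        refine Finset.filter_congr fun j _ => ?_
        rw [hab j]
      have hca : (Finset.univ.filter fun j => a j ≠ 0).card
          = L - (Finset.univ.filter fun j => b j ≠ 0).card := by
        rw [hfa]; exact hflipcard b
      have hble : (Finset.univ.filter fun j => b j ≠ 0).card ≤ L :=
        le_trans (Finset.card_filter_le _ _) (le_of_eq huL)
      omega
  -- conclusion
  rcases le_or_gt ((Finset.univ.filter fun j => a₀ j ≠ 0).card) ((L - 1) / 2) with hle | hgt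
  · exact ⟨a₀, ⟨hle, ha₀sum.symm⟩,
      fun y hy => huniq y a₀ hy.1 hy.2.symm hle ha₀sum⟩
  · have h1 : ∑ j : Fin L, A (a₀ j + 1) * α ^ (j : ℕ) = k := (hflip a₀).trans ha₀sum
    have hale : (Finset.univ.filter fun j => a₀ j ≠ 0).card ≤ L :=
      le_trans (Finset.card_filter_le _ _) (le_of_eq huL)
    have hcard : (Finset.univ.filter fun j => a₀ j + 1 ≠ 0).card ≤ (L - 1) / 2 := by
      rw [hflipcard a₀]; omega
    exact ⟨fun j => a₀ j + 1, ⟨hcard, h1.symm⟩,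
      fun y hy => huniq y _ hy.1 hy.2.symm hcard h1⟩
end

section
/- Let L be an odd positive integer and let J denote the L×L all-ones matrix over GF(2)(α) where α is a primitive L-th root of unity, V the Vandermonde matrix with entries α^{ij}, Î the L×L matrix equal to the identity except the (1,1)-entry is 0, and Ĩ the L×(L−1) matrix obtained by placing a row of all ones on top of the identity I_{L-1}. Then V · Î · (J + V^{-1}) · Ĩ = Ĩ. -/
/-- For odd `L` and `α` a primitive `L`-th root of unity over GF(2), with `V`
the Vandermonde matrix, `J` the all-ones matrix, `Î` the identity with the
top-left entry zeroed, and `Ĩ` the `L×(L-1)` matrix that is a row of all ones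
atop `I_(L-1)`, the identity `V · Î · (J + V⁻¹) · Ĩ = Ĩ` holds. -/
theorem stmt18 (L : ℕ) (hLodd : Odd L) (hLpos : 0 < L)
    (F : Type*) [Field F] [CharP F 2] (α : F) (hα : IsPrimitiveRoot α L)
    (V J Ihat : Matrix (Fin L) (Fin L) F)
    (hV : ∀ i j : Fin L, V i j = α ^ ((i : ℕ) * (j : ℕ)))
    (hJ : ∀ i j : Fin L, J i j = 1)
    (hIhat : ∀ i j : Fin L, Ihat i j = if i = j ∧ (i : ℕ) ≠ 0 then 1 else 0)
    (Itil : Matrix (Fin L) (Fin (L - 1)) F)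
    (hItil : ∀ (i : Fin L) (j : Fin (L - 1)),
      Itil i j = if (i : ℕ) = 0 then 1 else if (i : ℕ) = (j : ℕ) + 1 then 1 else 0) :
    V * Ihat * (J + V⁻¹) * Itil = Itil := by
  have h2 : ∀ x : F, x + x = 0 := fun x => CharTwo.add_self_eq_zero x
  have hL1 : (L : F) = 1 := by
    obtain ⟨m, hm⟩ := hLodd
    have h20 : (2 : F) = 0 := by exact_mod_cast (CharP.cast_eq_zero F 2)
    subst hm
    push_cast
    rw [h20]; ring
  -- geometric sum lemma
  have hgeom : ∀ m : ℕ, (∑ j : Fin L, α ^ ((j : ℕ) * m)) = if L ∣ m then 1 else 0 := by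
    intro m
    have hx : (α ^ m) ^ L = 1 := by
      rw [← pow_mul, mul_comm, pow_mul, hα.pow_eq_one, one_pow]
    have hsum : (∑ j : Fin L, α ^ ((j : ℕ) * m)) = ∑ j ∈ Finset.range L, (α ^ m) ^ j := by
      rw [Fin.sum_univ_eq_sum_range (fun j => α ^ (j * m))]
      refine Finset.sum_congr rfl fun j _ => ?_
      rw [← pow_mul, mul_comm]
    rw [hsum]
    by_cases h : L ∣ m
    · rw [if_pos h]
      have hone : α ^ m = 1 := (hα.pow_eq_one_iff_dvd m).mpr h
      simp [hone, hL1]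
    · rw [if_neg h]
      have hx1 : α ^ m ≠ 1 := fun hc => h ((hα.pow_eq_one_iff_dvd m).mp hc)
      rw [geom_sum_eq hx1, hx]
      simp
  -- key divisibility fact
  have hkey : ∀ i k : Fin L, (L ∣ (i : ℕ) + (L - 1) * (k : ℕ)) ↔ i = k := by
    intro i k
    constructor
    · intro hd
      have h1 : (L : ℤ) ∣ (((i : ℕ) + (L - 1) * (k : ℕ) : ℕ) : ℤ) :=
        Int.natCast_dvd_natCast.mpr hd
      have hcast : (((i : ℕ) + (L - 1) * (k : ℕ) : ℕ) : ℤ)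
          = ((i : ℤ) + ((L : ℤ) - 1) * (k : ℤ)) := by
        push_cast [Nat.cast_sub (hLpos : 1 ≤ L)]
        ring
      rw [hcast] at h1
      have h3 := dvd_sub h1 (dvd_mul_right (L : ℤ) (k : ℤ))
      have heq : ((i : ℤ) + ((L : ℤ) - 1) * (k : ℤ)) - (L : ℤ) * (k : ℤ)
          = (i : ℤ) - (k : ℤ) := by ring
      rw [heq] at h3
      have hi : ((i : ℕ) : ℤ) < (L : ℤ) := by exact_mod_cast i.2
      have hk : ((k : ℕ) : ℤ) < (L : ℤ) := by exact_mod_cast k.2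
      have hi0 : (0 : ℤ) ≤ ((i : ℕ) : ℤ) := by positivity
      have hk0 : (0 : ℤ) ≤ ((k : ℕ) : ℤ) := by positivity
      have habs : |(i : ℤ) - (k : ℤ)| < (L : ℤ) := by
        rw [abs_lt]; omega
      have hz := Int.eq_zero_of_abs_lt_dvd h3 habs
      have : ((i : ℕ) : ℤ) = ((k : ℕ) : ℤ) := by omega
      exact Fin.ext (by exact_mod_cast this)
    · rintro rfl
      have hL' : L - 1 + 1 = L := by omega
      refine ⟨(i : ℕ), ?_⟩
      calc (i : ℕ) + (L - 1) * (i : ℕ) = (L - 1 + 1) * (i : ℕ) := by ring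
        _ = L * (i : ℕ) := by rw [hL']
  -- the inverse matrix
  set W : Matrix (Fin L) (Fin L) F :=
    Matrix.of fun i j => α ^ ((L - 1) * (i : ℕ) * (j : ℕ)) with hW
  have hVW : V * W = 1 := by
    ext i k
    rw [Matrix.mul_apply]
    have step : ∀ j : Fin L,
        V i j * W j k = α ^ ((j : ℕ) * ((i : ℕ) + (L - 1) * (k : ℕ))) := by
      intro j
      rw [hV]
      show α ^ ((i : ℕ) * (j : ℕ)) * α ^ ((L - 1) * (j : ℕ) * (k : ℕ)) = _
      rw [← pow_add]
      congr 1
      ring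
    rw [Finset.sum_congr rfl fun j _ => step j, hgeom, Matrix.one_apply]
    by_cases h : i = k
    · rw [if_pos ((hkey i k).mpr h), if_pos h]
    · rw [if_neg (fun hc => h ((hkey i k).mp hc)), if_neg h]
  have hVinv : V⁻¹ = W := Matrix.inv_eq_right_inv hVW
  -- V * Ihat
  have hA : V * Ihat
      = Matrix.of fun i j : Fin L => if (j : ℕ) = 0 then 0 else α ^ ((i : ℕ) * (j : ℕ)) := by
    ext i j
    rw [Matrix.mul_apply]
    rw [Finset.sum_eq_single j]
    · rw [hV, hIhat]
      by_cases h : (j : ℕ) = 0 <;> simp [h]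
    · intro b _ hb
      rw [hIhat]
      simp [hb]
    · intro h
      exact absurd (Finset.mem_univ j) h
  -- V * Ihat * (J + W)
  have hB : V * Ihat * (J + W)
      = Matrix.of fun i k : Fin L =>
          (if (i : ℕ) = 0 then (1 : F) else 0) + (if i = k then 1 else 0) := by
    rw [hA]
    ext i k
    rw [Matrix.mul_apply]
    have step : ∀ j : Fin L,
        (Matrix.of fun i j : Fin L => if (j : ℕ) = 0 then (0 : F) else α ^ ((i : ℕ) * (j : ℕ))) i j
            * (J + W) j k
          = α ^ ((j : ℕ) * (i : ℕ)) + α ^ ((j : ℕ) * ((i : ℕ) + (L - 1) * (k : ℕ))) := by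
      intro j
      rw [Matrix.add_apply, hJ]
      show (if (j : ℕ) = 0 then (0 : F) else α ^ ((i : ℕ) * (j : ℕ)))
          * (1 + α ^ ((L - 1) * (j : ℕ) * (k : ℕ))) = _
      by_cases hj : (j : ℕ) = 0
      · rw [if_pos hj, zero_mul, hj]
        simp [h2 1]
      · rw [if_neg hj, mul_add, mul_one, ← pow_add]
        congr 1
        · congr 1; ring
        · congr 1; ring
    rw [Finset.sum_congr rfl fun j _ => step j, Finset.sum_add_distrib, hgeom, hgeom]
    have hdvd0 : (L ∣ (i : ℕ)) ↔ (i : ℕ) = 0 := by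
      constructor
      · intro h; exact Nat.eq_zero_of_dvd_of_lt h i.2
      · intro h; rw [h]; exact dvd_zero L
    rw [Matrix.of_apply]
    by_cases h0 : (i : ℕ) = 0 <;> by_cases hik : i = k
    · rw [if_pos (hdvd0.mpr h0), if_pos ((hkey i k).mpr hik), if_pos h0, if_pos hik]
    · rw [if_pos (hdvd0.mpr h0), if_neg (fun hc => hik ((hkey i k).mp hc)),
        if_pos h0, if_neg hik]
    · rw [if_neg (fun hc => h0 (hdvd0.mp hc)), if_pos ((hkey i k).mpr hik),
        if_neg h0, if_pos hik]
    · rw [if_neg (fun hc => h0 (hdvd0.mp hc)), if_neg (fun hc => hik ((hkey i k).mp hc)),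
        if_neg h0, if_neg hik]
  rw [hVinv, hB]
  ext i j
  rw [Matrix.mul_apply]
  have hj1 : (j : ℕ) + 1 < L := by have := j.2; omega
  set k0 : Fin L := ⟨0, hLpos⟩ with hk0
  set k1 : Fin L := ⟨(j : ℕ) + 1, hj1⟩ with hk1
  have hItil' : ∀ k : Fin L,
      Itil k j = (if k = k0 then (1 : F) else 0) + (if k = k1 then 1 else 0) := by
    intro k
    rw [hItil]
    by_cases h0 : (k : ℕ) = 0
    · have he : k = k0 := Fin.ext h0
      have hne : k ≠ k1 := by
        intro hc
        rw [hc] at h0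
        simp [hk1] at h0
      rw [if_pos h0, if_pos he, if_neg hne, add_zero]
    · by_cases h1 : (k : ℕ) = (j : ℕ) + 1
      · have he : k = k1 := Fin.ext h1
        have hne : k ≠ k0 := fun hc => h0 (by rw [hc])
        rw [if_neg h0, if_pos h1, if_neg hne, if_pos he, zero_add]
      · have hne0 : k ≠ k0 := fun hc => h0 (by rw [hc])
        have hne1 : k ≠ k1 := fun hc => h1 (by rw [hc])
        rw [if_neg h0, if_neg h1, if_neg hne0, if_neg hne1, add_zero]
  have step : ∀ k : Fin L,
      (Matrix.of fun i k : Fin L =>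
          (if (i : ℕ) = 0 then (1 : F) else 0) + (if i = k then 1 else 0)) i k * Itil k j
        = (if k = k0 then ((if (i : ℕ) = 0 then (1 : F) else 0) + (if i = k then 1 else 0))
            else 0)
          + (if k = k1 then ((if (i : ℕ) = 0 then (1 : F) else 0) + (if i = k then 1 else 0))
            else 0) := by
    intro k
    rw [Matrix.of_apply, hItil' k, mul_add]
    congr 1 <;> by_cases h : k = k0 <;> by_cases h' : k = k1 <;> simp [h, h']
  rw [Finset.sum_congr rfl fun k _ => step k, Finset.sum_add_distrib,
    Finset.sum_ite_eq' Finset.univ k0, Finset.sum_ite_eq' Finset.univ k1,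
    if_pos (Finset.mem_univ k0), if_pos (Finset.mem_univ k1)]
  have hik0 : (i = k0) ↔ (i : ℕ) = 0 := ⟨fun h => by rw [h], fun h => Fin.ext h⟩
  have hik1 : (i = k1) ↔ (i : ℕ) = (j : ℕ) + 1 := ⟨fun h => by rw [h], fun h => Fin.ext h⟩
  rw [hItil]
  simp only [hik0, hik1]
  by_cases h0 : (i : ℕ) = 0
  · have hne : ¬ ((i : ℕ) = (j : ℕ) + 1) := by omega
    simp [h0, hne, h2 1]
  · by_cases h1 : (i : ℕ) = (j : ℕ) + 1 <;> simp [h0, h1]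
end
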